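/- arXiv:0907.0026 — 6 statements merged into one kernel-verified Lean document; each statement's English description precedes it below -/
import Mathlib

section
/- In the kernel-map RKHS setup with dense span, fix ℓ ∈ Fin m and a constant c > 0. Then the following are equivalent: (i) there exists a bounded operator T : H →L[ℂ] H with ‖T‖ ≤ c such that T (κ w x) = conj(w_ℓ) • (κ w x) for all w ∈ Ω and x ∈ E₀; (ii) the kernel (z, w) ↦ (c² − z_ℓ · conj(w_ℓ)) • K z w is nonnegative definite. Consequently, when such a T exists, its adjoint T* is the bounded ℓ-th coordinate multiplication operator M_ℓ on H, and ‖T‖ (= ‖M_ℓ‖) is the smallest c > 0 for which (ii) holds. -/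
open scoped ComplexOrder

/-- A kernel `G : Ω → Ω → (E₀ →L[ℂ] E₀)` is *nonnegative definite*. -/
def IsNNDKernel {Ω E₀ : Type*} [NormedAddCommGroup E₀] [InnerProductSpace ℂ E₀]
    (G : Ω → Ω → (E₀ →L[ℂ] E₀)) : Prop :=
  ∀ (p : ℕ) (w : Fin p → Ω) (ζ : Fin p → E₀),
    0 ≤ ∑ i : Fin p, ∑ j : Fin p, (inner ℂ (G (w j) (w i) (ζ i)) (ζ j) : ℂ)

/-!
With `h = ∑ᵢ κ wᵢ ζᵢ` and `g = ∑ᵢ conj (wᵢ ℓ) • κ wᵢ ζᵢ`, the kernel sum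
`∑ᵢⱼ ⟪(c² - wⱼ ℓ · conj (wᵢ ℓ)) • K wⱼ wᵢ ζᵢ, ζⱼ⟫` equals `c² ‖h‖² - ‖g‖²`. So nonnegative
definiteness says exactly that `h ↦ g` is well defined and bounded by `c` on the dense span of
the `κ w x`, and it then extends to all of `H` with the same bound. Taking adjoints in
`T ∘ κ z = conj (z ℓ) • κ z` gives the multiplier identity, and since `T` is determined by its
values on the dense span, the admissible `c > 0` are exactly those with `‖T‖ ≤ c`.
-/

open Set Finsupp ComplexConjugate
open scoped InnerProduct

theorem exists_continuousLinearMap_apply_eq_of_norm_linearCombination_le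
    {ι 𝕜 E F : Type*} [NontriviallyNormedField 𝕜] [NormedAddCommGroup E] [NormedSpace 𝕜 E]
    [NormedAddCommGroup F] [NormedSpace 𝕜 F] [CompleteSpace F] {v : ι → E} {u : ι → F}
    (hv : Dense (Submodule.span 𝕜 (range v) : Set E)) {c : ℝ} (hc : 0 ≤ c)
    (h : ∀ f, ‖linearCombination 𝕜 u f‖ ≤ c * ‖linearCombination 𝕜 v f‖) :
    ∃ T : E →L[𝕜] F, ‖T‖ ≤ c ∧ ∀ i, T (v i) = u i := by
  have hd : DenseRange (linearCombination 𝕜 v) := by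
    rwa [DenseRange, ← LinearMap.coe_range, range_linearCombination]
  exact ⟨(linearCombination 𝕜 u).extendOfNorm (linearCombination 𝕜 v),
    LinearMap.opNorm_extendOfNorm_le hd hc h,
    fun i => by simpa using LinearMap.extendOfNorm_eq hd ⟨c, h⟩ (single i 1)⟩

theorem Real.sInf_Ioi_inter_Ici {r : ℝ} (hr : 0 ≤ r) : sInf (Ioi 0 ∩ Ici r) = r := by
  rcases hr.eq_or_lt with rfl | hr
  · rw [inter_eq_left.mpr Ioi_subset_Ici_self, csInf_Ioi]
  · rw [inter_eq_right.mpr (Ici_subset_Ioi.mpr hr), csInf_Ici]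

theorem ContinuousLinearMap.adjoint_comp_adjoint_eq_smul {𝕜 E F : Type*} [RCLike 𝕜]
    [NormedAddCommGroup E] [InnerProductSpace 𝕜 E] [CompleteSpace E]
    [NormedAddCommGroup F] [InnerProductSpace 𝕜 F] [CompleteSpace F]
    {A : E →L[𝕜] F} {T : F →L[𝕜] F} {a : 𝕜} (h : ∀ x, T (A x) = conj a • A x) :
    A† ∘L T† = a • A† := by
  have hTA : T ∘L A = conj a • A := ext h
  simpa [adjoint_comp, map_smulₛₗ] using congrArg adjoint hTA

section KernelMap

variable {Ω E₀ H : Type*} [NormedAddCommGroup E₀] [InnerProductSpace ℂ E₀]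
  [NormedAddCommGroup H] [InnerProductSpace ℂ H]
  (κ : Ω → E₀ →L[ℂ] H) (φ : Ω → ℂ)

/-- `c` bounds the densely defined operator `κ w x ↦ conj (φ w) • κ w x`. -/
def BoundsConjMultiplier (c : ℝ) : Prop :=
  ∀ (p : ℕ) (w : Fin p → Ω) (ζ : Fin p → E₀),
    ‖∑ i, conj (φ (w i)) • κ (w i) (ζ i)‖ ≤ c * ‖∑ i, κ (w i) (ζ i)‖

theorem sum_inner_smul_adjoint_comp_eq [CompleteSpace E₀] [CompleteSpace H] (c : ℝ) {p : ℕ}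
    (w : Fin p → Ω) (ζ : Fin p → E₀) :
    ∑ i, ∑ j, inner ℂ ((((c : ℂ) ^ 2 - φ (w j) * conj (φ (w i))) • (κ (w j))† ∘L κ (w i))
      (ζ i)) (ζ j)
      = ((c ^ 2 * ‖∑ i, κ (w i) (ζ i)‖ ^ 2 - ‖∑ i, conj (φ (w i)) • κ (w i) (ζ i)‖ ^ 2 : ℝ)
        : ℂ) := by
  have hnorm (x : H) : (‖x‖ : ℂ) ^ 2 = inner ℂ x x := (inner_self_eq_norm_sq_to_K x).symm
  push_cast
  rw [hnorm, hnorm]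
  simp only [Pi.smul_apply, Function.comp_apply, inner_smul_left,
    ContinuousLinearMap.adjoint_inner_left, sum_inner, inner_sum, inner_smul_right,
    Finset.mul_sum, ← Finset.sum_sub_distrib, map_sub, map_mul, map_pow, Complex.conj_conj,
    Complex.conj_ofReal]
  rw [Finset.sum_comm]
  refine Finset.sum_congr rfl fun i _ => Finset.sum_congr rfl fun j _ => ?_
  ring

theorem isNNDKernel_iff_boundsConjMultiplier [CompleteSpace E₀] [CompleteSpace H] {c : ℝ}
    (hc : 0 ≤ c) :
    IsNNDKernel (fun z w => ((c : ℂ) ^ 2 - φ z * conj (φ w)) • (κ z)† ∘L κ w) ↔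
      BoundsConjMultiplier κ φ c := by
  refine forall₃_congr fun p w ζ => ?_
  rw [sum_inner_smul_adjoint_comp_eq, Complex.zero_le_real, sub_nonneg, ← mul_pow,
    pow_le_pow_iff_left₀ (norm_nonneg _) (by positivity) two_ne_zero]

theorem BoundsConjMultiplier.norm_linearCombination_le {c : ℝ} (h : BoundsConjMultiplier κ φ c)
    (f : Ω × E₀ →₀ ℂ) :
    ‖linearCombination ℂ (fun q => conj (φ q.1) • κ q.1 q.2) f‖
      ≤ c * ‖linearCombination ℂ (fun q => κ q.1 q.2) f‖ := by
  classical
  set e := f.support.equivFin.symm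
  convert h _ (fun k => (e k).1.1) (fun k => f (e k) • (e k).1.2) using 3 <;>
    simp only [linearCombination_apply, Finsupp.sum, ← f.support.sum_attach, map_smul,
      smul_comm (f _)] <;>
    exact (Fintype.sum_equiv e _ _ fun _ => rfl).symm

theorem exists_continuousLinearMap_iff_boundsConjMultiplier [CompleteSpace H]
    (hdense : Dense (Submodule.span ℂ (⋃ w, range (κ w)) : Set H)) {c : ℝ} (hc : 0 ≤ c) :
    (∃ T : H →L[ℂ] H, ‖T‖ ≤ c ∧ ∀ w x, T (κ w x) = conj (φ w) • κ w x) ↔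
      BoundsConjMultiplier κ φ c := by
  constructor
  · rintro ⟨T, hTc, hT⟩ p w ζ
    calc ‖∑ i, conj (φ (w i)) • κ (w i) (ζ i)‖ = ‖T (∑ i, κ (w i) (ζ i))‖ := by
          simp only [map_sum, hT]
      _ ≤ ‖T‖ * ‖∑ i, κ (w i) (ζ i)‖ := T.le_opNorm _
      _ ≤ c * ‖∑ i, κ (w i) (ζ i)‖ := by gcongr
  · intro h
    have hrange : range (fun q : Ω × E₀ => κ q.1 q.2) = ⋃ w, range (κ w) := by
      ext; simp
    obtain ⟨T, hTc, hT⟩ := exists_continuousLinearMap_apply_eq_of_norm_linearCombination_le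
      (hrange ▸ hdense) hc (h.norm_linearCombination_le κ φ)
    exact ⟨T, hTc, fun w x => hT (w, x)⟩

end KernelMap

/-- Lemma 1.4: boundedness of the densely defined coordinate "backward" operator
`T : κ w x ↦ conj (w ℓ) • κ w x` with bound `c` is equivalent to nonnegative definiteness of
the kernel `(z, w) ↦ (c² − z_ℓ conj (w_ℓ)) • K z w`; when such a `T` exists its adjoint is the
`ℓ`-th coordinate multiplication operator `M_ℓ`, and `‖T‖` is the smallest positive `c` for
which the positivity condition holds. -/
theorem coordinate_multiplier_bounded_iff_nnd
    {m : ℕ} {Ω : Set (Fin m → ℂ)}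
    {E₀ H : Type*} [NormedAddCommGroup E₀] [InnerProductSpace ℂ E₀] [CompleteSpace E₀]
    [NormedAddCommGroup H] [InnerProductSpace ℂ H] [CompleteSpace H]
    (κ : Ω → (E₀ →L[ℂ] H))
    (hdense : Dense (↑(Submodule.span ℂ (⋃ w : Ω, Set.range (κ w))) : Set H))
    (K : Ω → Ω → (E₀ →L[ℂ] E₀))
    (hK : ∀ z w : Ω, K z w = (ContinuousLinearMap.adjoint (κ z)).comp (κ w))
    (ℓ : Fin m) (c : ℝ) (hc : 0 < c) :
    ((∃ T : H →L[ℂ] H, ‖T‖ ≤ c ∧ ∀ (w : Ω) (x : E₀),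
        T (κ w x) = (starRingEnd ℂ) ((w : Fin m → ℂ) ℓ) • κ w x) ↔
      IsNNDKernel (fun (z w : Ω) =>
        (((c : ℂ) ^ 2 - (z : Fin m → ℂ) ℓ * (starRingEnd ℂ) ((w : Fin m → ℂ) ℓ)) • K z w)))
    ∧ (∀ T : H →L[ℂ] H,
        (∀ (w : Ω) (x : E₀), T (κ w x) = (starRingEnd ℂ) ((w : Fin m → ℂ) ℓ) • κ w x) →
        (∀ z : Ω, (ContinuousLinearMap.adjoint (κ z)).comp (ContinuousLinearMap.adjoint T)
            = ((z : Fin m → ℂ) ℓ) • ContinuousLinearMap.adjoint (κ z))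
        ∧ ‖T‖ = sInf {c' : ℝ | 0 < c' ∧ IsNNDKernel (fun (z w : Ω) =>
            (((c' : ℂ) ^ 2 - (z : Fin m → ℂ) ℓ * (starRingEnd ℂ) ((w : Fin m → ℂ) ℓ))
              • K z w))}) := by
  obtain rfl : K = fun z w => (κ z)† ∘L κ w := funext₂ hK
  set φ : Ω → ℂ := fun w => (w : Fin m → ℂ) ℓ
  have hbounded (c' : ℝ) (hc' : 0 < c') :
      (∃ T : H →L[ℂ] H, ‖T‖ ≤ c' ∧ ∀ w x, T (κ w x) = conj (φ w) • κ w x) ↔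
        IsNNDKernel (fun z w => ((c' : ℂ) ^ 2 - φ z * conj (φ w)) • (κ z)† ∘L κ w) :=
    (exists_continuousLinearMap_iff_boundsConjMultiplier κ φ hdense hc'.le).trans
      (isNNDKernel_iff_boundsConjMultiplier κ φ hc'.le).symm
  refine ⟨hbounded c hc, fun T hT =>
    ⟨fun z => ContinuousLinearMap.adjoint_comp_adjoint_eq_smul (hT z), ?_⟩⟩
  have hunique {T' : H →L[ℂ] H} (hT' : ∀ w x, T' (κ w x) = conj (φ w) • κ w x) : T' = T :=
    ContinuousLinearMap.ext_on hdense fun _ hy => by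
      obtain ⟨w, x, rfl⟩ := mem_iUnion.mp hy
      rw [hT, hT']
  have hset : {c' : ℝ | 0 < c' ∧
      IsNNDKernel (fun z w => ((c' : ℂ) ^ 2 - φ z * conj (φ w)) • (κ z)† ∘L κ w)}
      = Ioi 0 ∩ Ici ‖T‖ :=
    ext fun c' => and_congr_right fun hc' => (hbounded c' hc').symm.trans
      ⟨fun ⟨T', hT'c, hT'⟩ => hunique hT' ▸ hT'c, fun hTc => ⟨T, hTc, hT⟩⟩
  rw [hset, Real.sInf_Ioi_inter_Ici (norm_nonneg T)]
end

section
/- (Theorem 2.2, factorization form.) Let Ω be a set, E₀ a complex Hilbert space, K : Ω → Ω → (E₀ →L[ℂ] E₀) a kernel, and k : Ω → Ω → ℂ a scalar function. Then the following are equivalent: (i) there exist a complex Hilbert space E and a map π : Ω → (E →L[ℂ] E₀) such that K z w = k z w • (π z ∘L (π w)*) for all z, w ∈ Ω; (ii) there exists a nonnegative definite kernel G : Ω → Ω → (E₀ →L[ℂ] E₀) such that K z w = k z w • (G z w) for all z, w ∈ Ω. -/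
open scoped ComplexOrder

/-!
A kernel of the form `π z (π w)*` is nonnegative definite because its quadratic form is
`‖∑ i, (π (w i))* (ζ i)‖²`. Conversely, testing nonnegative definiteness on two points
(with `η` and `I • η`) shows that a nonnegative definite kernel `G` is Hermitian, so `G` is a
positive semidefinite operator-valued matrix, and Moore's theorem (`RKHS.OfKernel`) writes it as
`G z w = (kerFun z)* (kerFun w)` on its reproducing kernel Hilbert space; `π z := (kerFun z)*`
is the factorization.
-/

universe u v

open ContinuousLinearMap

theorem isNNDKernel_comp_adjoint {Ω E₀ E : Type*} [NormedAddCommGroup E₀]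
    [InnerProductSpace ℂ E₀] [CompleteSpace E₀] [NormedAddCommGroup E] [InnerProductSpace ℂ E]
    [CompleteSpace E] (π : Ω → (E →L[ℂ] E₀)) : IsNNDKernel fun z w => π z ∘L adjoint (π w) := by
  intro p w ζ
  set v := ∑ i, adjoint (π (w i)) (ζ i)
  calc (0 : ℂ) ≤ ((‖v‖ ^ 2 : ℝ) : ℂ) := Complex.zero_le_real.mpr (sq_nonneg _)
    _ = inner ℂ v v := by rw [inner_self_eq_norm_sq_to_K]; norm_cast
    _ = _ := by
      simp only [v, sum_inner]
      simp only [inner_sum, adjoint_inner_right, comp_apply]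

namespace IsNNDKernel

variable {Ω : Type u} {E₀ : Type v} [NormedAddCommGroup E₀] [InnerProductSpace ℂ E₀]
  {G : Ω → Ω → (E₀ →L[ℂ] E₀)}

theorem sum_nonneg (hG : IsNNDKernel G) {ι : Type*} [Fintype ι] (w : ι → Ω) (ζ : ι → E₀) :
    0 ≤ ∑ i, ∑ j, (inner ℂ (G (w j) (w i) (ζ i)) (ζ j) : ℂ) := by
  let e := (Fintype.equivFin ι).symm
  simp_rw [← e.sum_comp]
  exact hG _ (w ∘ e) (ζ ∘ e)

theorem inner_apply_swap (hG : IsNNDKernel G) (x y : Ω) (ξ η : E₀) :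
    (inner ℂ (G y x ξ) η : ℂ) = inner ℂ ξ (G x y η) := by
  have diag (z : Ω) (ζ : E₀) := Complex.nonneg_iff.mp (by simpa using hG 1 ![z] ![ζ])
  have h1 := Complex.nonneg_iff.mp (hG 2 ![x, y] ![ξ, η])
  have h2 := Complex.nonneg_iff.mp (hG 2 ![x, y] ![ξ, Complex.I • η])
  simp only [Fin.sum_univ_two, Matrix.cons_val_zero, Matrix.cons_val_one, Matrix.cons_val_fin_one,
    map_smul, inner_smul_left, inner_smul_right, Complex.conj_I, Complex.add_re, Complex.add_im,
    Complex.mul_re, Complex.mul_im, Complex.neg_re, Complex.neg_im, Complex.I_re, Complex.I_im]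
    at h1 h2
  rw [← inner_conj_symm ξ]
  apply Complex.ext <;> simp only [Complex.conj_re, Complex.conj_im] <;>
    linarith [(diag x ξ).2, (diag y η).2]

variable [CompleteSpace E₀]

theorem isHermitian (hG : IsNNDKernel G) : (Matrix.of G).IsHermitian :=
  Matrix.IsHermitian.ext fun x y => ext fun ξ => ext_inner_right ℂ fun η => by
    simp [star_eq_adjoint, adjoint_inner_left, hG.inner_apply_swap]

theorem posSemidef (hG : IsNNDKernel G) : (Matrix.of G).PosSemidef := by
  -- the third condition of `posSemidef_tfae` is nonnegativity of the form on `v : Ω →₀ E₀`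
  refine (RKHS.posSemidef_tfae (𝕜 := ℂ) (K := Matrix.of G) |>.out 2 0).mp
    (And.intro hG.isHermitian fun v => ?_)
  have hv := Complex.nonneg_iff.mp (hG.sum_nonneg (fun x : v.support => x.1) (fun x => v x))
  simpa [Finsupp.sum, ← Finset.sum_coe_sort v.support] using hv.1

theorem exists_eq_comp_adjoint (hG : IsNNDKernel G) :
    ∃ (E : Type (max u v)) (_ : NormedAddCommGroup E) (_ : InnerProductSpace ℂ E)
      (_ : CompleteSpace E) (π : Ω → (E →L[ℂ] E₀)), ∀ z w, G z w = π z ∘L adjoint (π w) := by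
  have : Fact (Matrix.of G).PosSemidef := ⟨hG.posSemidef⟩
  refine ⟨RKHS.OfKernel (Matrix.of G), inferInstance, inferInstance, inferInstance,
    fun z => adjoint (RKHS.kerFun _ z), fun z w => ?_⟩
  rw [adjoint_adjoint, ← RKHS.kernel_apply, RKHS.OfKernel.kernel_ofKernel, Matrix.of_apply]

end IsNNDKernel

/-- Theorem 2.2, factorization form: a kernel `K` factors as
`K z w = k z w • (π z ∘ (π w)*)` through some Hilbert space `E` if and only if
`K z w = k z w • G z w` for some nonnegative definite kernel `G`. -/
theorem kernel_factors_through_hilbert_space_iff_nnd_factor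
    {Ω : Type u} {E₀ : Type v}
    [NormedAddCommGroup E₀] [InnerProductSpace ℂ E₀] [CompleteSpace E₀]
    (K : Ω → Ω → (E₀ →L[ℂ] E₀)) (k : Ω → Ω → ℂ) :
    (∃ (E : Type (max u v)) (_ : NormedAddCommGroup E) (_ : InnerProductSpace ℂ E)
        (_ : CompleteSpace E) (π : Ω → (E →L[ℂ] E₀)),
      ∀ z w : Ω, K z w = k z w • ((π z).comp (ContinuousLinearMap.adjoint (π w)))) ↔
    (∃ G : Ω → Ω → (E₀ →L[ℂ] E₀), IsNNDKernel G ∧ ∀ z w : Ω, K z w = k z w • G z w) := by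
  constructor
  · rintro ⟨E, _, _, _, π, hK⟩
    exact ⟨_, isNNDKernel_comp_adjoint π, hK⟩
  · rintro ⟨G, hG, hK⟩
    obtain ⟨E, _, _, _, π, hπ⟩ := hG.exists_eq_comp_adjoint
    exact ⟨E, _, _, _, π, fun z w => by rw [hK, hπ]⟩
end

section
/- (Theorem 3.1.) Let Ω ⊆ ℂ^m, E₀ and H complex Hilbert spaces, κ : Ω → (E₀ →L[ℂ] H) with {κ w x} of dense linear span in H and kernel K z w := (κ z)* ∘L (κ w). Let M₁, …, M_m be pairwise commuting bounded operators on H with (M_ℓ)* (κ w x) = conj(w_ℓ) • (κ w x) for all w ∈ Ω, x ∈ E₀, ℓ. Then the self-adjoint operator ∑_{A ⊆ Fin m} (−1)^{|A|} (∏_{ℓ ∈ A} M_ℓ) ∘ (∏_{ℓ ∈ A} M_ℓ)* (the hereditary functional calculus value 𝕊^{-1}(M, M*) of the inverse Szegő polynomial ∏_{ℓ=1}^m (1 − z_ℓ conj(w_ℓ))) is a positive operator on H if and only if the kernel (z, w) ↦ (∏_{ℓ=1}^m (1 − z_ℓ · conj(w_ℓ))) • K z w is nonnegative definite on Ω. 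-/
open scoped ComplexOrder

/-!
The kernel vectors `κ w x` are joint eigenvectors of the `M_ℓ*`, with eigenvalues `conj w_ℓ`, so
`⟪𝕊⁻¹(M, M*) κ_w x, κ_z y⟫ = ∏ ℓ (1 - w_ℓ conj z_ℓ) ⟪κ_w x, κ_z y⟫`. Hence the quadratic form of
`𝕊⁻¹(M, M*)` at `∑ i κ_{w_i} ζ_i` is exactly the sum in the nonnegative-definiteness condition
for `(1 - z w*) K`. These vectors exhaust the dense span of the kernel vectors, and the quadratic
form is continuous, so its nonnegativity there extends to all of `H`.
-/

open scoped InnerProductSpace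
open ContinuousLinearMap

theorem Submodule.exists_sum_eq_of_mem_span_iUnion_range {R E F Φ ι : Type*} [Semiring R]
    [AddCommMonoid E] [Module R E] [AddCommMonoid F] [Module R F] [FunLike Φ E F]
    [LinearMapClass Φ R E F] (κ : ι → Φ) {g : F}
    (hg : g ∈ Submodule.span R (⋃ w, Set.range (κ w))) :
    ∃ (p : ℕ) (w : Fin p → ι) (ζ : Fin p → E), ∑ i, κ (w i) (ζ i) = g := by
  obtain ⟨p, c, v, hv⟩ := Submodule.mem_span_set'.mp hg
  have hmem : ∀ i, ∃ (w : ι) (x : E), κ w x = c i • (v i : F) := fun i => by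
    obtain ⟨w, x, hx⟩ := Set.mem_iUnion.mp (v i).2
    exact ⟨w, c i • x, by rw [map_smul, hx]⟩
  choose w ζ hwζ using hmem
  exact ⟨p, w, ζ, by simp only [hwζ, hv]⟩

section Hereditary

variable {𝕜 ι H : Type*} [RCLike 𝕜] [NormedAddCommGroup H] [InnerProductSpace 𝕜 H]

theorem forall_nonneg_inner_of_dense {T : H →L[𝕜] H} {s : Set H} (hs : Dense s)
    (h : ∀ g ∈ s, 0 ≤ ⟪T g, g⟫_𝕜) (f : H) : 0 ≤ ⟪T f, f⟫_𝕜 :=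
  hs.induction h (isClosed_le continuous_const (T.continuous.inner continuous_id)) f

variable [CompleteSpace H]

theorem adjoint_noncommProd_apply_of_adjoint_apply_eq_smul (M : ι → (H →L[𝕜] H))
    {v : H} {c : ι → 𝕜} (hv : ∀ i, adjoint (M i) v = c i • v) (s : Finset ι)
    (comm : (s : Set ι).Pairwise (Function.onFun Commute M)) :
    adjoint (s.noncommProd M comm) v = (∏ i ∈ s, c i) • v := by
  induction s using Finset.cons_induction with
  | empty => simp [Finset.noncommProd_empty, ContinuousLinearMap.one_def, adjoint_id]
  | cons a s ha ih =>
    rw [Finset.noncommProd_cons, mul_def, adjoint_comp, comp_apply, hv, map_smul,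
      ih (comm.mono (by simp)), Finset.prod_cons, smul_smul]

variable [Fintype ι]

/-- `𝕊⁻¹(M, M*)`: expand `∏ ℓ (1 - z_ℓ conj w_ℓ) = ∑ A (-1)^|A| z^A conj w^A` and put `M^A` in
place of `z^A` on the left, `(M^A)*` in place of `conj w^A` on the right. -/
noncomputable def hereditarySzegoInv (M : ι → (H →L[𝕜] H))
    (hcomm : ∀ i j, Commute (M i) (M j)) : H →L[𝕜] H :=
  ∑ A : Finset ι, ((-1 : 𝕜) ^ A.card) •
    (A.noncommProd M (fun i _ j _ _ => hcomm i j) *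
      adjoint (A.noncommProd M (fun i _ j _ _ => hcomm i j)))

theorem inner_hereditarySzegoInv_apply_of_adjoint_apply_eq_smul (M : ι → (H →L[𝕜] H))
    (hcomm : ∀ i j, Commute (M i) (M j)) {u v : H} {a b : ι → 𝕜}
    (hu : ∀ i, adjoint (M i) u = a i • u) (hv : ∀ i, adjoint (M i) v = b i • v) :
    ⟪hereditarySzegoInv M hcomm u, v⟫_𝕜 =
      (∏ i, (1 - (starRingEnd 𝕜) (a i) * b i)) * ⟪u, v⟫_𝕜 := by
  classical
  have hterm : ∀ A : Finset ι,
      ⟪(((-1 : 𝕜) ^ A.card) • (A.noncommProd M (fun i _ j _ _ => hcomm i j) *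
        adjoint (A.noncommProd M (fun i _ j _ _ => hcomm i j)))) u, v⟫_𝕜 =
      (∏ i ∈ A, -((starRingEnd 𝕜) (a i) * b i)) * ⟪u, v⟫_𝕜 := fun A => by
    rw [smul_apply, inner_smul_left, mul_apply_eq_comp, ← adjoint_inner_right,
      adjoint_noncommProd_apply_of_adjoint_apply_eq_smul M hu A fun i _ j _ _ => hcomm i j,
      adjoint_noncommProd_apply_of_adjoint_apply_eq_smul M hv A fun i _ j _ _ => hcomm i j,
      inner_smul_left, inner_smul_right, Finset.prod_neg, Finset.prod_mul_distrib, map_prod]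
    simp only [map_pow, map_neg, map_one]
    ring
  have hexpand : ∏ i, (1 - (starRingEnd 𝕜) (a i) * b i) =
      ∑ A : Finset ι, ∏ i ∈ A, -((starRingEnd 𝕜) (a i) * b i) := by
    simp only [sub_eq_add_neg, Finset.prod_one_add, Finset.powerset_univ]
  rw [hereditarySzegoInv, sum_apply, sum_inner, hexpand, Finset.sum_mul]
  exact Finset.sum_congr rfl fun A _ => hterm A

end Hereditary

theorem inner_hereditarySzegoInv_sum_eq_sum_sum {ι Ω E₀ H : Type*} [Fintype ι]
    [NormedAddCommGroup E₀] [InnerProductSpace ℂ E₀] [CompleteSpace E₀]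
    [NormedAddCommGroup H] [InnerProductSpace ℂ H] [CompleteSpace H]
    {coord : Ω → ι → ℂ} (κ : Ω → (E₀ →L[ℂ] H)) (M : ι → (H →L[ℂ] H))
    (hcomm : ∀ i j, Commute (M i) (M j))
    (hM : ∀ ℓ w x, adjoint (M ℓ) (κ w x) = (starRingEnd ℂ) (coord w ℓ) • κ w x)
    (p : ℕ) (w : Fin p → Ω) (ζ : Fin p → E₀) :
    ⟪hereditarySzegoInv M hcomm (∑ i, κ (w i) (ζ i)), ∑ j, κ (w j) (ζ j)⟫_ℂ =
      ∑ i, ∑ j, ⟪((∏ ℓ, (1 - coord (w j) ℓ * (starRingEnd ℂ) (coord (w i) ℓ))) •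
        (adjoint (κ (w j))).comp (κ (w i))) (ζ i), ζ j⟫_ℂ := by
  rw [map_sum, sum_inner]
  refine Finset.sum_congr rfl fun i _ => ?_
  rw [inner_sum]
  refine Finset.sum_congr rfl fun j _ => ?_
  rw [inner_hereditarySzegoInv_apply_of_adjoint_apply_eq_smul M hcomm (hM · (w i) (ζ i))
    (hM · (w j) (ζ j)), smul_apply, inner_smul_left, comp_apply, adjoint_inner_left]
  simp only [map_prod, map_sub, map_one, map_mul, Complex.conj_conj, mul_comm (coord _ _)]

/-- Theorem 3.1: for the commuting coordinate multipliers `M₁, …, M_m` on a reproducing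
kernel Hilbert space with kernel `K` on `Ω ⊆ ℂ^m`, the hereditary functional calculus value
`𝕊⁻¹(M, M*) = ∑_{A ⊆ {1,…,m}} (−1)^{|A|} M^A (M^A)*` of the inverse Szegő polynomial is a
positive operator if and only if `(z, w) ↦ (∏_ℓ (1 − z_ℓ conj (w_ℓ))) • K z w` is a
nonnegative definite kernel. -/
theorem hereditary_szego_positive_iff_nnd
    {m : ℕ} {Ω : Set (Fin m → ℂ)} {E₀ H : Type*}
    [NormedAddCommGroup E₀] [InnerProductSpace ℂ E₀] [CompleteSpace E₀]
    [NormedAddCommGroup H] [InnerProductSpace ℂ H] [CompleteSpace H]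
    (κ : Ω → (E₀ →L[ℂ] H))
    (hdense : Dense (↑(Submodule.span ℂ (⋃ w : Ω, Set.range (κ w))) : Set H))
    (K : Ω → Ω → (E₀ →L[ℂ] E₀))
    (hK : ∀ z w : Ω, K z w = (ContinuousLinearMap.adjoint (κ z)).comp (κ w))
    (M : Fin m → (H →L[ℂ] H))
    (hcomm : ∀ i j : Fin m, Commute (M i) (M j))
    (hM : ∀ (ℓ : Fin m) (w : Ω) (x : E₀),
      (ContinuousLinearMap.adjoint (M ℓ)) (κ w x)
        = (starRingEnd ℂ) ((w : Fin m → ℂ) ℓ) • κ w x) :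
    (∀ f : H,
      0 ≤ (inner ℂ ((∑ A : Finset (Fin m), ((-1 : ℂ) ^ A.card) •
          ((A.noncommProd M (fun i _ j _ _ => hcomm i j)) *
            ContinuousLinearMap.adjoint (A.noncommProd M (fun i _ j _ _ => hcomm i j)))) f)
        f : ℂ)) ↔
    IsNNDKernel (fun (z w : Ω) =>
      (∏ ℓ : Fin m, (1 - (z : Fin m → ℂ) ℓ * (starRingEnd ℂ) ((w : Fin m → ℂ) ℓ))) • K z w) := by
  obtain rfl : K = fun z w => (adjoint (κ z)).comp (κ w) := funext₂ hK
  have hgram := inner_hereditarySzegoInv_sum_eq_sum_sum (coord := Subtype.val) κ M hcomm hM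
  change (∀ f, 0 ≤ ⟪hereditarySzegoInv M hcomm f, f⟫_ℂ) ↔ _
  constructor
  · intro hpos p w ζ
    rw [← hgram p w ζ]
    exact hpos _
  · intro hnnd
    refine forall_nonneg_inner_of_dense hdense fun g hg => ?_
    obtain ⟨p, w, ζ, rfl⟩ := Submodule.exists_sum_eq_of_mem_span_iUnion_range κ hg
    rw [hgram]
    exact hnnd p w ζ
end

section
/- (Section 4 computation.) The kernel (z, w) ↦ 2 − z · conj(w) on the open unit disc 𝔻 = {z ∈ ℂ : |z| < 1} is not nonnegative definite: there exist p ∈ ℕ, points w₁, …, w_p ∈ 𝔻 and scalars ζ₁, …, ζ_p ∈ ℂ such that Re ∑_{i,j=1}^p (2 − w_j · conj(w_i)) · ζ_i · conj(ζ_j) < 0. (This is the restriction to the diagonal of (1 − z₁conj(w₁))(1 − z₂conj(w₂)) K_S(z,w) for the module S of Section 4, and shows S admits no isometric co-extension to a vector-valued Hardy module over the bidisc.) -/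
open Finset ComplexConjugate

theorem sum_sum_sub_mul_conj_mul_mul_conj {R ι : Type*} [CommRing R] [StarRing R] [Fintype ι]
    (c : R) (w ζ : ι → R) :
    ∑ i, ∑ j, (c - w j * conj (w i)) * ζ i * conj (ζ j) =
      c * (∑ i, ζ i) * conj (∑ i, ζ i) -
        conj (∑ i, w i * conj (ζ i)) * ∑ i, w i * conj (ζ i) := by
  rw [map_sum, map_sum, mul_assoc, sum_mul_sum, mul_sum, sum_mul_sum, ← sum_sub_distrib]
  refine sum_congr rfl fun i _ => ?_
  rw [mul_sum, ← sum_sub_distrib]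
  refine sum_congr rfl fun j _ => ?_
  simp only [map_mul, starRingEnd_self_apply]
  ring

/-- Section 4 computation: the kernel `(z, w) ↦ 2 − z conj w` on the open unit disc is not
nonnegative definite. -/
theorem two_sub_mul_conj_not_nnd :
    ∃ (p : ℕ) (w : Fin p → ℂ) (ζ : Fin p → ℂ),
      (∀ i, ‖w i‖ < 1) ∧
      (∑ i : Fin p, ∑ j : Fin p,
        (2 - w j * (starRingEnd ℂ) (w i)) * ζ i * (starRingEnd ℂ) (ζ j)).re < 0 := by
  refine ⟨2, ![0, 1 / 2], ![1, -1], ?_, ?_⟩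
  · intro i
    fin_cases i <;> norm_num
  · -- Since `ζ` sums to zero, only `-|∑ wᵢ conj ζᵢ|² = -1/4` survives.
    rw [sum_sum_sub_mul_conj_mul_mul_conj]
    norm_num [Fin.sum_univ_two]
end

section
/- (Proposition 5.3, kernel form: Drury–Arveson co-extension.) Let Ω = 𝔹^m be the open Euclidean unit ball of ℂ^m, let E₀ and H be complex Hilbert spaces, κ : 𝔹^m → (E₀ →L[ℂ] H) with dense span and kernel K z w := (κ z)* ∘L (κ w), and let M₁, …, M_m be bounded operators on H with (M_ℓ)* (κ w x) = conj(w_ℓ) • (κ w x) for all w, x, ℓ. If ∑_{ℓ=1}^m M_ℓ ∘ (M_ℓ)* ≤ id_H, then there exist a complex Hilbert space E and a map π : 𝔹^m → (E →L[ℂ] E₀) such that (1 − ∑_{ℓ=1}^m z_ℓ · conj(w_ℓ)) • K z w = π z ∘L (π w)* for all z, w ∈ 𝔹^m; equivalently, K z w = (1 − ⟨z, w⟩)^{-1} • (π z ∘L (π w)*), so that K admits the Drury–Arveson kernel (1 − ⟨z,w⟩)^{-1} as a factor and H is realized as a quotient module of the E-valued Drury–Arveson module H²_m ⊗ E. -/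
/-!
With `D = 1 - ∑ ℓ, M ℓ ∘L (M ℓ)†`, the row-contraction hypothesis says `0 ≤ D`. Since each `κ w x`
is a joint eigenvector of the `(M ℓ)†` with eigenvalues `conj (w ℓ)`, compressing `D` gives
`(κ z)† ∘L D ∘L κ w = (1 - ⟨z, w⟩) • K z w`, and writing `D = √D ∘L √D` factors this as
`π z ∘L (π w)†` with `π z = (κ z)† ∘L √D`.
-/

universe u v

open ContinuousLinearMap
open scoped InnerProduct InnerProductSpace ComplexConjugate

namespace ContinuousLinearMap

section RCLike

variable {𝕜 E H : Type*} [RCLike 𝕜]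
  [NormedAddCommGroup E] [InnerProductSpace 𝕜 E] [CompleteSpace E]
  [NormedAddCommGroup H] [InnerProductSpace 𝕜 H] [CompleteSpace H]

theorem le_one_of_re_inner_le_norm_sq {T : H →L[𝕜] H} (hT : IsSelfAdjoint T)
    (h : ∀ f, RCLike.re ⟪T f, f⟫_𝕜 ≤ ‖f‖ ^ 2) : T ≤ 1 := by
  rw [le_def, isPositive_def']
  refine ⟨(IsSelfAdjoint.one _).sub hT, fun f => ?_⟩
  have hf := h f
  rw [reApplyInnerSelf, sub_apply, inner_sub_left, map_sub, one_apply_eq_self,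
    inner_self_eq_norm_sq]
  linarith

theorem adjoint_comp_eq_smul_adjoint_of_adjoint_comp_eq_conj_smul {T : H →L[𝕜] H}
    {A : E →L[𝕜] H} {c : 𝕜} (h : T† ∘L A = conj c • A) : A† ∘L T = c • A† := by
  simpa [adjoint_comp, LinearIsometryEquiv.map_smulₛₗ] using congr_arg adjoint h

theorem adjoint_comp_one_sub_sum_comp {ι : Type*} [Fintype ι] (M : ι → H →L[𝕜] H)
    {A B : E →L[𝕜] H} {a b : ι → 𝕜} (hA : ∀ ℓ, (M ℓ)† ∘L A = conj (a ℓ) • A)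
    (hB : ∀ ℓ, (M ℓ)† ∘L B = conj (b ℓ) • B) :
    A† ∘L (1 - ∑ ℓ, M ℓ ∘L (M ℓ)†) ∘L B = (1 - ∑ ℓ, a ℓ * conj (b ℓ)) • (A† ∘L B) := by
  have hterm (ℓ : ι) : A† ∘L M ℓ ∘L (M ℓ)† ∘L B = (a ℓ * conj (b ℓ)) • (A† ∘L B) := by
    rw [← comp_assoc, adjoint_comp_eq_smul_adjoint_of_adjoint_comp_eq_conj_smul (hA ℓ), hB ℓ,
      smul_comp, comp_smul, smul_smul]
  ext x
  simpa [sub_smul, Finset.sum_smul] using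
    Finset.sum_congr rfl fun ℓ _ => DFunLike.congr_fun (hterm ℓ) x

end RCLike

/-- The factor space is `E₀ × H` rather than `H` only so that it lives in `Type (max u v)`. -/
theorem exists_adjoint_comp_comp_eq_comp_adjoint {X : Type*} {E₀ : Type u} {H : Type v}
    [NormedAddCommGroup E₀] [InnerProductSpace ℂ E₀] [CompleteSpace E₀]
    [NormedAddCommGroup H] [InnerProductSpace ℂ H] [CompleteSpace H]
    (κ : X → E₀ →L[ℂ] H) {D : H →L[ℂ] H} (hD : 0 ≤ D) :
    ∃ (E : Type (max u v)) (_ : NormedAddCommGroup E) (_ : InnerProductSpace ℂ E)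
      (_ : CompleteSpace E) (π : X → E →L[ℂ] E₀),
      ∀ z w, (κ z)† ∘L D ∘L κ w = π z ∘L (π w)† := by
  let V : H →L[ℂ] WithLp 2 (E₀ × H) :=
    (WithLp.prodContinuousLinearEquiv 2 ℂ E₀ H).symm.toContinuousLinearMap ∘L inr ℂ E₀ H
  have hV : V† ∘L V = 1 := (norm_map_iff_adjoint_comp_self V).mp fun x => by simp [V]
  set S := CFC.sqrt D
  have hS : IsSelfAdjoint S := (CFC.sqrt_nonneg D).isSelfAdjoint
  refine ⟨WithLp 2 (E₀ × H), inferInstance, inferInstance, inferInstance,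
    fun z => (κ z)† ∘L S ∘L V†, fun z w => ?_⟩
  calc (κ z)† ∘L D ∘L κ w = (κ z)† ∘L S ∘L (V† ∘L V) ∘L S ∘L κ w := by
        rw [hV, one_def, id_comp, ← comp_assoc S, ← mul_def, CFC.sqrt_mul_sqrt_self D hD]
    _ = ((κ z)† ∘L S ∘L V†) ∘L ((κ w)† ∘L S ∘L V†)† := by
        simp only [adjoint_comp, adjoint_adjoint, hS.adjoint_eq, comp_assoc]

end ContinuousLinearMap

theorem drury_arveson_factorization_of_row_contraction_general
    {m : ℕ} {E₀ : Type u} {H : Type v}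
    [NormedAddCommGroup E₀] [InnerProductSpace ℂ E₀] [CompleteSpace E₀]
    [NormedAddCommGroup H] [InnerProductSpace ℂ H] [CompleteSpace H]
    (κ : {z : Fin m → ℂ | ∑ ℓ, ‖z ℓ‖ ^ 2 < 1} → (E₀ →L[ℂ] H))
    (K : {z : Fin m → ℂ | ∑ ℓ, ‖z ℓ‖ ^ 2 < 1} → {z : Fin m → ℂ | ∑ ℓ, ‖z ℓ‖ ^ 2 < 1} →
      (E₀ →L[ℂ] E₀))
    (hK : ∀ z w, K z w = (ContinuousLinearMap.adjoint (κ z)).comp (κ w))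
    (M : Fin m → (H →L[ℂ] H))
    (hM : ∀ (ℓ : Fin m) (w : {z : Fin m → ℂ | ∑ ℓ, ‖z ℓ‖ ^ 2 < 1}) (x : E₀),
      (ContinuousLinearMap.adjoint (M ℓ)) (κ w x)
        = (starRingEnd ℂ) ((w : Fin m → ℂ) ℓ) • κ w x)
    (hrow : ∀ f : H,
      (inner ℂ (∑ ℓ : Fin m, (M ℓ) ((ContinuousLinearMap.adjoint (M ℓ)) f)) f : ℂ).re
        ≤ ‖f‖ ^ 2) :
    ∃ (E : Type (max u v)) (_ : NormedAddCommGroup E) (_ : InnerProductSpace ℂ E)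
        (_ : CompleteSpace E) (π : {z : Fin m → ℂ | ∑ ℓ, ‖z ℓ‖ ^ 2 < 1} → (E →L[ℂ] E₀)),
      ∀ z w : {z : Fin m → ℂ | ∑ ℓ, ‖z ℓ‖ ^ 2 < 1},
        (1 - ∑ ℓ : Fin m, (z : Fin m → ℂ) ℓ * (starRingEnd ℂ) ((w : Fin m → ℂ) ℓ)) • K z w
          = (π z).comp (ContinuousLinearMap.adjoint (π w)) := by
  have hsa : IsSelfAdjoint (∑ ℓ, M ℓ ∘L (M ℓ)†) :=
    isSelfAdjoint_sum _ fun ℓ _ => IsSelfAdjoint.mul_star_self (M ℓ)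
  have hD : 0 ≤ 1 - ∑ ℓ, M ℓ ∘L (M ℓ)† :=
    sub_nonneg.mpr (le_one_of_re_inner_le_norm_sq hsa fun f => by simpa [sum_inner] using hrow f)
  obtain ⟨E, _, _, _, π, hπ⟩ := exists_adjoint_comp_comp_eq_comp_adjoint κ hD
  refine ⟨E, inferInstance, inferInstance, inferInstance, π, fun z w => ?_⟩
  rw [← hπ, hK, adjoint_comp_one_sub_sum_comp M (fun ℓ => ext (hM ℓ z)) fun ℓ => ext (hM ℓ w)]

/-- Proposition 5.3, kernel form: if the coordinate multipliers on a reproducing kernel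
Hilbert module over the unit ball `𝔹^m` satisfy the row contraction condition
`∑ M_ℓ M_ℓ* ≤ I`, then the kernel factors as
`(1 − ⟨z, w⟩) • K z w = π z ∘ (π w)*` through some Hilbert space `E`; that is, `K` admits
the Drury–Arveson kernel `(1 − ⟨z, w⟩)⁻¹` as a factor and `H` is a quotient module of the
`E`-valued Drury–Arveson module. -/
theorem drury_arveson_factorization_of_row_contraction
    {m : ℕ} {E₀ : Type u} {H : Type v}
    [NormedAddCommGroup E₀] [InnerProductSpace ℂ E₀] [CompleteSpace E₀]
    [NormedAddCommGroup H] [InnerProductSpace ℂ H] [CompleteSpace H]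
    (κ : {z : Fin m → ℂ | ∑ ℓ, ‖z ℓ‖ ^ 2 < 1} → (E₀ →L[ℂ] H))
    (hdense : Dense
      (↑(Submodule.span ℂ
        (⋃ w : {z : Fin m → ℂ | ∑ ℓ, ‖z ℓ‖ ^ 2 < 1}, Set.range (κ w))) : Set H))
    (K : {z : Fin m → ℂ | ∑ ℓ, ‖z ℓ‖ ^ 2 < 1} → {z : Fin m → ℂ | ∑ ℓ, ‖z ℓ‖ ^ 2 < 1} →
      (E₀ →L[ℂ] E₀))
    (hK : ∀ z w, K z w = (ContinuousLinearMap.adjoint (κ z)).comp (κ w))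
    (M : Fin m → (H →L[ℂ] H))
    (hM : ∀ (ℓ : Fin m) (w : {z : Fin m → ℂ | ∑ ℓ, ‖z ℓ‖ ^ 2 < 1}) (x : E₀),
      (ContinuousLinearMap.adjoint (M ℓ)) (κ w x)
        = (starRingEnd ℂ) ((w : Fin m → ℂ) ℓ) • κ w x)
    (hrow : ∀ f : H,
      (inner ℂ (∑ ℓ : Fin m, (M ℓ) ((ContinuousLinearMap.adjoint (M ℓ)) f)) f : ℂ).re
        ≤ ‖f‖ ^ 2) :
    ∃ (E : Type (max u v)) (_ : NormedAddCommGroup E) (_ : InnerProductSpace ℂ E)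
        (_ : CompleteSpace E) (π : {z : Fin m → ℂ | ∑ ℓ, ‖z ℓ‖ ^ 2 < 1} → (E →L[ℂ] E₀)),
      ∀ z w : {z : Fin m → ℂ | ∑ ℓ, ‖z ℓ‖ ^ 2 < 1},
        (1 - ∑ ℓ : Fin m, (z : Fin m → ℂ) ℓ * (starRingEnd ℂ) ((w : Fin m → ℂ) ℓ)) • K z w
          = (π z).comp (ContinuousLinearMap.adjoint (π w)) :=
  drury_arveson_factorization_of_row_contraction_general κ K hK M hM hrow
end

section
/- (Bergman-type positivity implies Hardy-type positivity.) Let E₀ be a complex Hilbert space and K : 𝔻^m → 𝔻^m → (E₀ →L[ℂ] E₀) a kernel on the open polydisc 𝔻^m = {z ∈ ℂ^m : |z_ℓ| < 1 for all ℓ}. If the kernel (z, w) ↦ (∏_{ℓ=1}^m (1 − z_ℓ · conj(w_ℓ))²) • K z w is nonnegative definite on 𝔻^m, then the kernel (z, w) ↦ (∏_{ℓ=1}^m (1 − z_ℓ · conj(w_ℓ))) • K z w is also nonnegative definite on 𝔻^m. (Hence if a reproducing kernel Hilbert module over the polydisc admits an isometric co-extension to a vector-valued Bergman module, it also admits one to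 a vector-valued Hardy module.) -/
/-!
On the polydisc `1 - z_ℓ conj (w_ℓ)` never vanishes, so the Hardy-type kernel is the Bergman-type
kernel multiplied by the Szegő kernel `∏_ℓ (1 - z_ℓ conj (w_ℓ))⁻¹`. Each factor
`(1 - a conj b)⁻¹ = ∑ₙ aⁿ conj (bⁿ)` is a convergent series of rank-one kernels `f z conj (f w)`, and
multiplying a nonnegative definite kernel by a rank-one kernel, or by a pointwise sum of a series
of such, keeps it nonnegative definite.
-/

open scoped ComplexOrder

open scoped ComplexConjugate

theorem norm_mul_conj_lt_one {a b : ℂ} (ha : ‖a‖ < 1) (hb : ‖b‖ < 1) : ‖a * conj b‖ < 1 := by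
  rw [norm_mul, Complex.norm_conj]
  exact mul_lt_one_of_nonneg_of_lt_one_left (norm_nonneg _) ha hb.le

theorem one_sub_mul_conj_ne_zero {a b : ℂ} (ha : ‖a‖ < 1) (hb : ‖b‖ < 1) : 1 - a * conj b ≠ 0 :=
  sub_ne_zero.mpr fun h => by simpa [← h] using norm_mul_conj_lt_one ha hb

namespace IsNNDKernel

variable {Ω E₀ : Type*} [NormedAddCommGroup E₀] [InnerProductSpace ℂ E₀]
  {G : Ω → Ω → (E₀ →L[ℂ] E₀)}

theorem mul_conj_smul (hG : IsNNDKernel G) (f : Ω → ℂ) :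
    IsNNDKernel fun z w => (f z * conj (f w)) • G z w := by
  intro p w ζ
  refine (hG p w fun i => conj (f (w i)) • ζ i).trans_eq
    (Finset.sum_congr rfl fun i _ => Finset.sum_congr rfl fun j _ => ?_)
  rw [smul_apply, map_smul, inner_smul_left, inner_smul_left,
    inner_smul_right, map_mul, Complex.conj_conj]
  ring

theorem of_hasSum_smul {ι : Type*} {a : ι → Ω → Ω → ℂ} {b : Ω → Ω → ℂ}
    (ha : ∀ n, IsNNDKernel fun z w => a n z w • G z w) (hab : ∀ z w, HasSum (a · z w) (b z w)) :
    IsNNDKernel fun z w => b z w • G z w := by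
  intro p w ζ
  refine HasSum.nonneg (L := .unconditional ι) (fun n => ha n p w ζ)
    (hasSum_sum fun i _ => hasSum_sum fun j _ => ?_)
  simp only [smul_apply, inner_smul_left]
  exact (Complex.hasSum_conj'.mpr (hab _ _)).mul_right _

theorem szego_smul (hG : IsNNDKernel G) {f : Ω → ℂ} (hf : ∀ z, ‖f z‖ < 1) :
    IsNNDKernel fun z w => (1 - f z * conj (f w))⁻¹ • G z w := by
  refine of_hasSum_smul (a := fun n z w => (f z * conj (f w)) ^ n)
    (fun n => ?_) fun z w => hasSum_geometric_of_norm_lt_one (norm_mul_conj_lt_one (hf z) (hf w))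
  simpa only [mul_pow, ← map_pow] using hG.mul_conj_smul (f · ^ n)

theorem prod_szego_smul (hG : IsNNDKernel G) {ι : Type*} (s : Finset ι) {f : ι → Ω → ℂ}
    (hf : ∀ ℓ z, ‖f ℓ z‖ < 1) :
    IsNNDKernel fun z w => (∏ ℓ ∈ s, (1 - f ℓ z * conj (f ℓ w))⁻¹) • G z w := by
  classical
  induction s using Finset.induction_on with
  | empty => simpa using hG
  | insert a s ha ih =>
    simpa only [Finset.prod_insert ha, mul_smul] using ih.szego_smul (hf a)

end IsNNDKernel

theorem hardy_factor_nnd_of_bergman_factor_nnd_general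
    {m : ℕ} {E₀ : Type*} [NormedAddCommGroup E₀] [InnerProductSpace ℂ E₀]
    (K : {z : Fin m → ℂ | ∀ ℓ, ‖z ℓ‖ < 1} → {z : Fin m → ℂ | ∀ ℓ, ‖z ℓ‖ < 1} →
      (E₀ →L[ℂ] E₀))
    (hBergman : IsNNDKernel (fun (z w : {z : Fin m → ℂ | ∀ ℓ, ‖z ℓ‖ < 1}) =>
      (∏ ℓ : Fin m, (1 - (z : Fin m → ℂ) ℓ * (starRingEnd ℂ) ((w : Fin m → ℂ) ℓ)) ^ 2)
        • K z w)) :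
    IsNNDKernel (fun (z w : {z : Fin m → ℂ | ∀ ℓ, ‖z ℓ‖ < 1}) =>
      (∏ ℓ : Fin m, (1 - (z : Fin m → ℂ) ℓ * (starRingEnd ℂ) ((w : Fin m → ℂ) ℓ)))
        • K z w) := by
  have hszego := hBergman.prod_szego_smul Finset.univ (f := fun ℓ z => z.1 ℓ) fun ℓ z => z.2 ℓ
  convert hszego using 3 with z w
  rw [smul_smul, ← Finset.prod_mul_distrib]
  refine congrArg (· • K z w) (Finset.prod_congr rfl fun ℓ _ => ?_)
  field_simp [one_sub_mul_conj_ne_zero (z.2 ℓ) (w.2 ℓ)]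

/-- Bergman-type positivity implies Hardy-type positivity on the polydisc: if
`(z, w) ↦ (∏_ℓ (1 − z_ℓ conj (w_ℓ))²) • K z w` is nonnegative definite on `𝔻^m`, then so is
`(z, w) ↦ (∏_ℓ (1 − z_ℓ conj (w_ℓ))) • K z w`. -/
theorem hardy_factor_nnd_of_bergman_factor_nnd
    {m : ℕ} {E₀ : Type*} [NormedAddCommGroup E₀] [InnerProductSpace ℂ E₀] [CompleteSpace E₀]
    (K : {z : Fin m → ℂ | ∀ ℓ, ‖z ℓ‖ < 1} → {z : Fin m → ℂ | ∀ ℓ, ‖z ℓ‖ < 1} →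
      (E₀ →L[ℂ] E₀))
    (hBergman : IsNNDKernel (fun (z w : {z : Fin m → ℂ | ∀ ℓ, ‖z ℓ‖ < 1}) =>
      (∏ ℓ : Fin m, (1 - (z : Fin m → ℂ) ℓ * (starRingEnd ℂ) ((w : Fin m → ℂ) ℓ)) ^ 2)
        • K z w)) :
    IsNNDKernel (fun (z w : {z : Fin m → ℂ | ∀ ℓ, ‖z ℓ‖ < 1}) =>
      (∏ ℓ : Fin m, (1 - (z : Fin m → ℂ) ℓ * (starRingEnd ℂ) ((w : Fin m → ℂ) ℓ)))
        • K z w) :=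
  hardy_factor_nnd_of_bergman_factor_nnd_general K hBergman
end
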